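/- arXiv:2106.15483 — 3 statements merged into one kernel-verified Lean document; each statement's English description precedes it below -/
import Mathlib

section
/- Let m_e > 0 and m_κ > 0 be real numbers and define m_{eκ±} := √(m_e² + m_κ²/4) ± m_κ/2. Then for every real λ, the 2×2 real matrix M := ![![m_e², m_e·m_κ], ![m_e·m_κ, m_e² + m_κ²]] satisfies det(M − λ·1₂) = (λ − m_{eκ−}²)·(λ − m_{eκ+}²); in particular the eigenvalues of M are exactly m_{eκ−}² and m_{eκ+}². -/
/-!
A `2 × 2` matrix `A` has `det (A - t • 1) = t² - tr A · t + det A`, so it suffices that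
`m₋² + m₊² = tr M = 2 m_e² + m_κ²` and `m₋² m₊² = det M = m_e⁴`. Both follow from
`s² = m_e² + m_κ²/4` for `s = √(m_e² + m_κ²/4)`, the second because `m₋ m₊ = s² - m_κ²/4 = m_e²`.
-/

open Real

namespace Matrix

variable {R : Type*} [CommRing R]

theorem det_sub_smul_one_fin_two (A : Matrix (Fin 2) (Fin 2) R) (t : R) :
    (A - t • (1 : Matrix (Fin 2) (Fin 2) R)).det = t ^ 2 - A.trace * t + A.det := by
  simp only [det_fin_two, trace_fin_two, one_fin_two, sub_apply, smul_apply, of_apply,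
    cons_val', cons_val_zero, cons_val_one, empty_val', cons_val_fin_one, smul_eq_mul]
  ring

theorem det_sub_smul_one_fin_two_eq_mul (A : Matrix (Fin 2) (Fin 2) R) {x y : R}
    (hsum : x + y = A.trace) (hprod : x * y = A.det) (t : R) :
    (A - t • (1 : Matrix (Fin 2) (Fin 2) R)).det = (t - x) * (t - y) := by
  rw [det_sub_smul_one_fin_two, ← hsum, ← hprod]
  ring

end Matrix

theorem sq_sqrt_sub_half_add_sq_sqrt_add_half (a b : ℝ) :
    (√(a ^ 2 + b ^ 2 / 4) - b / 2) ^ 2 + (√(a ^ 2 + b ^ 2 / 4) + b / 2) ^ 2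
      = 2 * a ^ 2 + b ^ 2 := by
  have hs : √(a ^ 2 + b ^ 2 / 4) ^ 2 = a ^ 2 + b ^ 2 / 4 := sq_sqrt (by positivity)
  linear_combination 2 * hs

theorem sqrt_sub_half_mul_sqrt_add_half (a b : ℝ) :
    (√(a ^ 2 + b ^ 2 / 4) - b / 2) * (√(a ^ 2 + b ^ 2 / 4) + b / 2) = a ^ 2 := by
  have hs : √(a ^ 2 + b ^ 2 / 4) ^ 2 = a ^ 2 + b ^ 2 / 4 := sq_sqrt (by positivity)
  linear_combination hs

theorem mass_matrix_char_poly_general (me mκ : ℝ)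
    (mekm mekp : ℝ)
    (hmekm : mekm = Real.sqrt (me ^ 2 + mκ ^ 2 / 4) - mκ / 2)
    (hmekp : mekp = Real.sqrt (me ^ 2 + mκ ^ 2 / 4) + mκ / 2)
    (M : Matrix (Fin 2) (Fin 2) ℝ)
    (hM : M = !![me ^ 2, me * mκ; me * mκ, me ^ 2 + mκ ^ 2]) :
    (∀ lam : ℝ, (M - lam • (1 : Matrix (Fin 2) (Fin 2) ℝ)).det
        = (lam - mekm ^ 2) * (lam - mekp ^ 2)) ∧
    (∀ lam : ℝ, (M - lam • (1 : Matrix (Fin 2) (Fin 2) ℝ)).det = 0 ↔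
        lam = mekm ^ 2 ∨ lam = mekp ^ 2) := by
  have hsum : mekm ^ 2 + mekp ^ 2 = M.trace := by
    rw [hM, Matrix.trace_fin_two_of, hmekm, hmekp, sq_sqrt_sub_half_add_sq_sqrt_add_half]
    ring
  have hprod : mekm ^ 2 * mekp ^ 2 = M.det := by
    rw [hM, Matrix.det_fin_two_of, ← mul_pow, hmekm, hmekp, sqrt_sub_half_mul_sqrt_add_half]
    ring
  have hdet := M.det_sub_smul_one_fin_two_eq_mul hsum hprod
  refine ⟨hdet, fun lam => ?_⟩
  rw [hdet, mul_eq_zero, sub_eq_zero, sub_eq_zero]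

/-- The mass-squared matrix of the scalar sector of Maxwell–Chern–Simons–Higgs
theory in the broken phase has characteristic polynomial
`(λ − m_{eκ−}²)(λ − m_{eκ+}²)`; in particular its eigenvalues are exactly
`m_{eκ−}²` and `m_{eκ+}²`. -/
theorem mass_matrix_char_poly (me mκ : ℝ) (hme : 0 < me) (hmκ : 0 < mκ)
    (mekm mekp : ℝ)
    (hmekm : mekm = Real.sqrt (me ^ 2 + mκ ^ 2 / 4) - mκ / 2)
    (hmekp : mekp = Real.sqrt (me ^ 2 + mκ ^ 2 / 4) + mκ / 2)
    (M : Matrix (Fin 2) (Fin 2) ℝ)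
    (hM : M = !![me ^ 2, me * mκ; me * mκ, me ^ 2 + mκ ^ 2]) :
    (∀ lam : ℝ, (M - lam • (1 : Matrix (Fin 2) (Fin 2) ℝ)).det
        = (lam - mekm ^ 2) * (lam - mekp ^ 2)) ∧
    (∀ lam : ℝ, (M - lam • (1 : Matrix (Fin 2) (Fin 2) ℝ)).det = 0 ↔
        lam = mekm ^ 2 ∨ lam = mekp ^ 2) :=
  mass_matrix_char_poly_general me mκ mekm mekp hmekm hmekp M hM
end

section
/- Let m_e > 0 and m_κ > 0, set m_{eκ±} := √(m_e² + m_κ²/4) ± m_κ/2 and u := (1/2)·arctan(2·m_e/m_κ), so that u ∈ (0, π/4) and tan(2u) = 2·m_e/m_κ. Then the rotation matrix U := ![![cos u, sin u], ![−sin u, cos u]] satisfies U ⬝ (diagonal matrix with entries m_{eκ−}², m_{eκ+}²) ⬝ Uᵀ = ![![m_e², m_e·m_κ], ![m_e·m_κ, m_e² + m_κ²]]. In other words, the SO(2) rotation through angle u diagonalizes the mass-squared matrix. -/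
open Real Matrix

/-!
Conjugating `diag(m - d, m + d)` by the rotation through `u` gives
`!![m - d cos 2u, d sin 2u; d sin 2u, m + d cos 2u]`. With `S = √(mₑ² + m_κ²/4)` the two squared
masses are `m ∓ d` for `m = mₑ² + m_κ²/2` and `d = S m_κ`, and `2u = arctan (2mₑ / m_κ)` has
`cos 2u = m_κ / 2S` and `sin 2u = mₑ / S`, which turn these entries into those of the
mass-squared matrix.
-/

theorem rotation_mul_diagonal_sub_add_mul_transpose (u m d : ℝ) :
    !![cos u, sin u; -sin u, cos u] * diagonal ![m - d, m + d] *
        (!![cos u, sin u; -sin u, cos u])ᵀ =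
      !![m - d * cos (2 * u), d * sin (2 * u); d * sin (2 * u), m + d * cos (2 * u)] := by
  have hpyth := sin_sq_add_cos_sq u
  rw [diagonal_vec2, eta_fin_two (_ᵀ), mul_fin_two, mul_fin_two, cos_two_mul, sin_two_mul]
  refine congrArg of (vec2_eq (vec2_eq ?_ ?_) (vec2_eq ?_ ?_)) <;>
    simp only [transpose_apply, of_apply, cons_val', cons_val_zero, cons_val_one, cons_val_fin_one]
  · linear_combination (m + d) * hpyth
  · ring
  · ring
  · linear_combination (m - d) * hpyth

theorem sqrt_one_add_div_sq {b : ℝ} (hb : 0 < b) (a : ℝ) :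
    √(1 + (a / b) ^ 2) = √(a ^ 2 + b ^ 2) / b := by
  rw [eq_div_iff hb.ne', ← sqrt_sq hb.le, ← sqrt_mul (by positivity), sqrt_sq hb.le]
  congr 1
  field_simp
  ring

theorem cos_arctan_div {b : ℝ} (hb : 0 < b) (a : ℝ) :
    cos (arctan (a / b)) = b / √(a ^ 2 + b ^ 2) := by
  rw [cos_arctan, sqrt_one_add_div_sq hb, one_div_div]

theorem sin_arctan_div {b : ℝ} (hb : 0 < b) (a : ℝ) :
    sin (arctan (a / b)) = a / √(a ^ 2 + b ^ 2) := by
  rw [sin_arctan, sqrt_one_add_div_sq hb, div_div_div_cancel_right₀ hb.ne']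

/-- The SO(2) rotation through the angle `u = (1/2)·arctan(2mₑ/m_κ)` diagonalizes the
mass-squared matrix of the scalar sector of Maxwell–Chern–Simons–Higgs theory in the
broken phase: `U ⬝ diag(m_{eκ−}², m_{eκ+}²) ⬝ Uᵀ = M`. -/
theorem rotation_diagonalizes_mass_matrix (me mκ : ℝ) (hme : 0 < me) (hmκ : 0 < mκ)
    (mekm mekp u : ℝ)
    (hmekm : mekm = Real.sqrt (me ^ 2 + mκ ^ 2 / 4) - mκ / 2)
    (hmekp : mekp = Real.sqrt (me ^ 2 + mκ ^ 2 / 4) + mκ / 2)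
    (hu : u = (1 / 2) * Real.arctan (2 * me / mκ))
    (U : Matrix (Fin 2) (Fin 2) ℝ)
    (hU : U = !![Real.cos u, Real.sin u; -Real.sin u, Real.cos u]) :
    u ∈ Set.Ioo 0 (π / 4) ∧ Real.tan (2 * u) = 2 * me / mκ ∧
    U * Matrix.diagonal ![mekm ^ 2, mekp ^ 2] * Uᵀ
      = !![me ^ 2, me * mκ; me * mκ, me ^ 2 + mκ ^ 2] := by
  set S := √(me ^ 2 + mκ ^ 2 / 4)
  have hS : 0 < S := sqrt_pos.2 (by positivity)
  have hS2 : S ^ 2 = me ^ 2 + mκ ^ 2 / 4 := sq_sqrt (by positivity)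
  have h2u : 2 * u = arctan (2 * me / mκ) := by rw [hu]; ring
  have hroot : √((2 * me) ^ 2 + mκ ^ 2) = 2 * S := by
    rw [show (2 * me) ^ 2 + mκ ^ 2 = 2 ^ 2 * (me ^ 2 + mκ ^ 2 / 4) by ring,
      sqrt_mul (by positivity), sqrt_sq zero_le_two]
  have hcos : 2 * S * cos (2 * u) = mκ := by
    rw [h2u, cos_arctan_div hmκ, hroot]; field_simp
  have hsin : S * sin (2 * u) = me := by
    rw [h2u, sin_arctan_div hmκ, hroot]; field_simp
  have hmekm2 : mekm ^ 2 = (me ^ 2 + mκ ^ 2 / 2) - S * mκ := by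
    rw [hmekm]; linear_combination hS2
  have hmekp2 : mekp ^ 2 = (me ^ 2 + mκ ^ 2 / 2) + S * mκ := by
    rw [hmekp]; linear_combination hS2
  have hangle : 0 < arctan (2 * me / mκ) := arctan_pos.2 (by positivity)
  refine ⟨⟨by linarith, by linarith [arctan_lt_pi_div_two (2 * me / mκ)]⟩,
    by rw [h2u, tan_arctan], ?_⟩
  rw [hU, hmekm2, hmekp2, rotation_mul_diagonal_sub_add_mul_transpose]
  refine congrArg of (vec2_eq (vec2_eq ?_ ?_) (vec2_eq ?_ ?_))
  · linear_combination (-mκ / 2) * hcos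
  · linear_combination mκ * hsin
  · linear_combination mκ * hsin
  · linear_combination (mκ / 2) * hcos
end

section
/- Let S : ℂ → Matrix (Fin N) (Fin N) ℂ be real-differentiable with S(z) invertible for every z ∈ ℂ, and let H₀ : ℂ → Matrix (Fin N) (Fin Nf) ℂ be complex-differentiable (holomorphic) on ℂ. Define H(z) := S(z)⁻¹ · H₀(z) and A_{z̄}(z) := −i·S(z)⁻¹·∂_{z̄}S(z). Then H solves the selfdual BPS vortex equation D_{z̄}H = 0, i.e. ∂_{z̄}H(z) + i·A_{z̄}(z)·H(z) = 0 for every z ∈ ℂ. -/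
/-!
Since `S · H = H₀` is holomorphic, its `∂_{z̄}`-derivative vanishes, and the Leibniz rule for the
Wirtinger derivative gives `∂_{z̄}S · H + S · ∂_{z̄}H = 0`. Multiplying by `S⁻¹` yields
`∂_{z̄}H = -S⁻¹ (∂_{z̄}S) H = -i A_{z̄} H`.
-/

open Matrix Complex

attribute [local instance] Matrix.frobeniusNormedAddCommGroup Matrix.frobeniusNormedSpace

/-- The Wirtinger derivative `∂_{z̄} f (w) = (1/2)(Df(w)[1] + i·Df(w)[i])`. -/
noncomputable def dzbar {E : Type*} [NormedAddCommGroup E] [NormedSpace ℂ E]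
    (f : ℂ → E) (w : ℂ) : E :=
  (2 : ℂ)⁻¹ • (fderiv ℝ f w 1 + Complex.I • fderiv ℝ f w Complex.I)

section Wirtinger

variable {E F G : Type*} [NormedAddCommGroup E] [NormedSpace ℂ E] [NormedAddCommGroup F]
  [NormedSpace ℂ F] [NormedAddCommGroup G] [NormedSpace ℂ G]

theorem dzbar_eq_zero_of_differentiableAt {f : ℂ → E} {w : ℂ} (hf : DifferentiableAt ℂ f w) :
    dzbar f w = 0 := by
  have hI : fderiv ℝ f w I = I • fderiv ℝ f w 1 := by
    rw [hf.fderiv_restrictScalars ℝ, ContinuousLinearMap.coe_restrictScalars',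
      ← ContinuousLinearMap.map_smul, smul_eq_mul, mul_one]
  rw [dzbar, hI, smul_smul, I_mul_I, neg_one_smul, add_neg_cancel, smul_zero]

theorem dzbar_bilinear (B : E →L[ℂ] F →L[ℂ] G) {f : ℂ → E} {g : ℂ → F} {w : ℂ}
    (hf : DifferentiableAt ℝ f w) (hg : DifferentiableAt ℝ g w) :
    dzbar (fun z => B (f z) (g z)) w = B (dzbar f w) (g w) + B (f w) (dzbar g w) := by
  have hB := (B.bilinearRestrictScalars ℝ).hasFDerivAt_of_bilinear hf.hasFDerivAt hg.hasFDerivAt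
  simp only [ContinuousLinearMap.bilinearRestrictScalars_apply_apply] at hB
  rw [dzbar, hB.fderiv]
  simp only [ContinuousLinearMap.precompR_apply, ContinuousLinearMap.precompL_apply,
    ContinuousLinearMap.compL_apply, ContinuousLinearMap.comp_apply,
    ContinuousLinearMap.bilinearRestrictScalars_apply_apply, _root_.add_apply, _root_.smul_apply,
    dzbar, map_add, map_smul, smul_add]
  abel

end Wirtinger

section MatrixCalculus

variable {X : Type*} [NormedAddCommGroup X] [NormedSpace ℝ X] {l m n : Type*} [Fintype l]
  [Fintype m] [Fintype n]

theorem DifferentiableAt.matrix_mul {f : X → Matrix l m ℂ} {g : X → Matrix m n ℂ} {x : X}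
    (hf : DifferentiableAt ℝ f x) (hg : DifferentiableAt ℝ g x) :
    DifferentiableAt ℝ (fun y => f y * g y) x :=
  (LinearMap.toContinuousBilinearMap
    (mulLinearMap ℝ : Matrix l m ℂ →ₗ[ℝ] Matrix m n ℂ →ₗ[ℝ] Matrix l n ℂ)).hasFDerivAt_of_bilinear
    hf.hasFDerivAt hg.hasFDerivAt |>.differentiableAt

theorem dzbar_matrix_mul {f : ℂ → Matrix l m ℂ} {g : ℂ → Matrix m n ℂ} {w : ℂ}
    (hf : DifferentiableAt ℝ f w) (hg : DifferentiableAt ℝ g w) :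
    dzbar (fun z => f z * g z) w = dzbar f w * g w + f w * dzbar g w :=
  dzbar_bilinear (LinearMap.toContinuousBilinearMap
    (mulLinearMap ℂ : Matrix l m ℂ →ₗ[ℂ] Matrix m n ℂ →ₗ[ℂ] Matrix l n ℂ)) hf hg

attribute [local instance] Matrix.frobeniusNormedRing Matrix.frobeniusNormedAlgebra

theorem DifferentiableAt.matrix_inv [DecidableEq n] {f : X → Matrix n n ℂ} {x : X}
    (hf : DifferentiableAt ℝ f x) (hx : IsUnit (f x)) :
    DifferentiableAt ℝ (fun y => (f y)⁻¹) x := by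
  rw [show (fun y => (f y)⁻¹) = fun y => Ring.inverse (f y) from
    funext fun y => Matrix.nonsing_inv_eq_ringInverse _]
  exact hf.inverse hx

end MatrixCalculus

/-- The moduli-matrix ansatz `H = S⁻¹·H₀(z)`, `A_{z̄} = −i·S⁻¹·∂_{z̄}S` solves the
selfdual BPS vortex equation `D_{z̄}H = ∂_{z̄}H + i·A_{z̄}·H = 0`. -/
theorem moduli_matrix_solves_selfdual (N Nf : ℕ)
    (S : ℂ → Matrix (Fin N) (Fin N) ℂ) (H₀ : ℂ → Matrix (Fin N) (Fin Nf) ℂ)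
    (hS : Differentiable ℝ S) (hSinv : ∀ z : ℂ, IsUnit (S z))
    (hH₀ : Differentiable ℂ H₀)
    (H : ℂ → Matrix (Fin N) (Fin Nf) ℂ) (hH : ∀ z, H z = (S z)⁻¹ * H₀ z)
    (Azbar : ℂ → Matrix (Fin N) (Fin N) ℂ)
    (hA : ∀ z, Azbar z = -Complex.I • ((S z)⁻¹ * dzbar S z)) :
    ∀ z : ℂ, dzbar H z + Complex.I • (Azbar z * H z) = 0 := by
  intro z
  have hdet : ∀ w, IsUnit (S w).det := fun w => (Matrix.isUnit_iff_isUnit_det _).mp (hSinv w)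
  have hH_diff : DifferentiableAt ℝ H z := by
    rw [show H = fun w => (S w)⁻¹ * H₀ w from funext hH]
    exact ((hS z).matrix_inv (hSinv z)).matrix_mul ((hH₀ z).restrictScalars ℝ)
  have hSH : (fun w => S w * H w) = H₀ :=
    funext fun w => by rw [hH, Matrix.mul_nonsing_inv_cancel_left _ _ (hdet w)]
  have hLeibniz : S z * dzbar H z + dzbar S z * H z = 0 := by
    rw [add_comm, ← dzbar_matrix_mul (hS z) hH_diff, hSH,
      dzbar_eq_zero_of_differentiableAt (hH₀ z)]
  calc dzbar H z + I • (Azbar z * H z)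
      = (S z)⁻¹ * (S z * dzbar H z + dzbar S z * H z) := by
        rw [hA, Matrix.mul_add, Matrix.nonsing_inv_mul_cancel_left _ _ (hdet z), Matrix.smul_mul,
          smul_smul, mul_neg, I_mul_I, neg_neg, one_smul, Matrix.mul_assoc]
    _ = 0 := by rw [hLeibniz, Matrix.mul_zero]
end
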